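/- In the cascade model, if a list R differs from the list T = (ã, η₁, ..., η_{K-1}) by containing at least one item with attractiveness at most α(η_K) < α(η_{K-1}), where α(η_{K-1}) < ... < α(η_1) < α(ã), then the per-round regret of R relative to T is at least (α(η_1) - α(η_K))·(1-α(ã))·∏_{k=1}^{K-2}(1-α(η_k)) > 0. Formally: for any multiset of K attractiveness values drawn from {α(ã), α(η_1),...,α(η_{K-1})} ∪ {values ≤ α(η_K)} that is not exactly {α(ã), α(η_1),...,α(η_{K-1})}, the cascade expected click count 1-∏(1-β_k) is at most 1 - (1-α(ã))(1-α(η_K))∏_{k=1}^{K-2}(1-α(η_k)). -/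
import Mathlib

open Multiset in
private lemma cascade_aux : ∀ (n : ℕ) (M : Multiset ℝ) (e : ℕ → ℝ),
    Multiset.card M = n →
    (∀ x ∈ M, x ≤ e 0) →
    (∀ t, t < n → e t ≤ 1) →
    (∀ t, 1 ≤ t → t < n → Multiset.card (M.filter (fun x => e t < x)) ≤ t) →
    ∏ t ∈ Finset.range n, (1 - e t) ≤ (M.map (fun x => 1 - x)).prod := by
  intro n
  induction n with
  | zero =>
    intro M e hcard _ _ _
    rw [Multiset.card_eq_zero] at hcard
    simp [hcard]
  | succ n ih =>
    intro M e hcard hle h1 hcnt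
    have hMne : M ≠ 0 := by
      intro h; rw [h] at hcard; simp at hcard
    obtain ⟨m, hmF, hmax⟩ := M.toFinset.exists_max_image id (by
      rw [Finset.nonempty_iff_ne_empty]
      simpa [Multiset.toFinset_eq_empty] using hMne)
    have hmM : m ∈ M := Multiset.mem_toFinset.mp hmF
    have hmax' : ∀ x ∈ M, x ≤ m := fun x hx => hmax x (Multiset.mem_toFinset.mpr hx)
    obtain ⟨M', rfl⟩ : ∃ M', M = m ::ₘ M' := ⟨M.erase m, (Multiset.cons_erase hmM).symm⟩
    rw [Multiset.card_cons] at hcard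
    have hcard' : Multiset.card M' = n := by omega
    have hle' : ∀ x ∈ M', x ≤ e 1 := by
      intro x hx
      by_contra hgt
      push_neg at hgt
      have hm : e 1 < m := lt_of_lt_of_le hgt (hmax' x (Multiset.mem_cons_of_mem hx))
      have h1n : (1:ℕ) < n + 1 := by
        have : 0 < Multiset.card M' := Multiset.card_pos.mpr (by
          intro h; rw [h] at hx; simp at hx)
        omega
      have hcc := hcnt 1 le_rfl h1n
      rw [Multiset.filter_cons_of_pos (p := fun x => e 1 < x) _ hm, Multiset.card_cons] at hcc
      have hxf : x ∈ M'.filter (fun y => e 1 < y) := Multiset.mem_filter.mpr ⟨hx, hgt⟩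
      have : 0 < Multiset.card (M'.filter (fun y => e 1 < y)) := Multiset.card_pos.mpr (by
        intro h; rw [h] at hxf; simp at hxf)
      omega
    have hcnt' : ∀ t, 1 ≤ t → t < n →
        Multiset.card (M'.filter (fun x => e (t+1) < x)) ≤ t := by
      intro t ht htn
      by_cases h0 : M'.filter (fun x => e (t+1) < x) = 0
      · simp [h0]
      · obtain ⟨x, hx⟩ := Multiset.exists_mem_of_ne_zero h0
        have hx' := Multiset.mem_filter.mp hx
        have hm : e (t+1) < m := lt_of_lt_of_le hx'.2 (hmax' x (Multiset.mem_cons_of_mem hx'.1))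
        have hcc := hcnt (t+1) (by omega) (by omega)
        rw [Multiset.filter_cons_of_pos (p := fun x => e (t+1) < x) _ hm,
          Multiset.card_cons] at hcc
        omega
    have hprod := ih M' (fun t => e (t+1)) hcard' hle'
      (fun t htn => h1 (t+1) (by omega)) hcnt'
    have htgt0 : 0 ≤ ∏ t ∈ Finset.range n, (1 - e (t+1)) := by
      apply Finset.prod_nonneg
      intro t htr
      have := h1 (t+1) (by simpa using Nat.succ_lt_succ (Finset.mem_range.mp htr))
      linarith
    have h0 : m ≤ e 0 := hle m (Multiset.mem_cons_self _ _)
    have he0 : e 0 ≤ 1 := h1 0 (Nat.succ_pos n)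
    rw [Finset.prod_range_succ', Multiset.map_cons, Multiset.prod_cons, mul_comm (1 - m)]
    exact mul_le_mul hprod (by linarith) (by linarith) (le_trans htgt0 hprod)

/-- Cascade model: any list of K attractiveness values drawn from
{ã, η₁, …, η_{K-1}} ∪ {values ≤ η_K} (each of the former used at most once)
that is not exactly {ã, η₁, …, η_{K-1}} has cascade expected click count at most
1 - (1-ã)(1-η_K)∏_{k=1}^{K-2}(1-η_k); and the corresponding regret gap
(η₁ - η_K)(1-ã)∏_{k=1}^{K-2}(1-η_k) is positive. -/
theorem cascade_regret_gap (K : ℕ) (hK : 2 ≤ K) (A : ℝ) (η : ℕ → ℝ)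
    (hηK0 : 0 ≤ η K)
    (hηdec : ∀ i ∈ Finset.Icc 1 (K - 1), η (i + 1) < η i)
    (hη1A : η 1 < A) (hA1 : A < 1)
    (β : Fin K → ℝ) (hβ : ∀ k, 0 ≤ β k ∧ β k < 1)
    (hdrawn : ∀ k, β k = A ∨ (∃ i ∈ Finset.Icc 1 (K - 1), β k = η i) ∨ β k ≤ η K)
    (hcount : ∀ x ∈ (A ::ₘ (Finset.Icc 1 (K - 1)).val.map η),
      (Finset.univ.val.map β).count x ≤ 1)
    (hne : (Finset.univ.val.map β) ≠ (A ::ₘ (Finset.Icc 1 (K - 1)).val.map η)) :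
    0 < (η 1 - η K) * (1 - A) * ∏ k ∈ Finset.Icc 1 (K - 2), (1 - η k) ∧
    1 - ∏ k, (1 - β k) ≤
      1 - (1 - A) * (1 - η K) * ∏ k ∈ Finset.Icc 1 (K - 2), (1 - η k) := by
  -- basic chain facts
  have hstep : ∀ j, 1 ≤ j → j < K → η (j+1) < η j := by
    intro j h1 h2
    exact hηdec j (Finset.mem_Icc.mpr ⟨h1, by omega⟩)
  have hmono : ∀ i j, 1 ≤ i → i ≤ j → j ≤ K → η j ≤ η i := by
    intro i j hi hij hjK
    induction j with
    | zero => omega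
    | succ n ihn =>
      rcases Nat.eq_or_lt_of_le hij with h | h
      · rw [← h]
      · have h1 : i ≤ n := by omega
        have h2 := ihn h1 (by omega)
        have h3 := hstep n (by omega) (by omega)
        linarith
  have hstrict : ∀ i j, 1 ≤ i → i < j → j ≤ K → η j < η i := by
    intro i j hi hij hjK
    have h1 := hmono (i+1) j (by omega) (by omega) hjK
    have h2 := hstep i hi (by omega)
    linarith
  have hηlt1 : ∀ i, 1 ≤ i → i ≤ K → η i < 1 := by
    intro i h1 h2
    have := hmono 1 i le_rfl h1 h2
    linarith
  have hβleA : ∀ k, β k ≤ A := by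
    intro k
    rcases hdrawn k with h | ⟨i, hi, h⟩ | h
    · exact le_of_eq h
    · rw [Finset.mem_Icc] at hi
      have := hmono 1 i le_rfl hi.1 (by omega)
      linarith [h]
    · have := hmono 1 K le_rfl (by omega) le_rfl
      linarith
  obtain ⟨K', rfl⟩ : ∃ K', K = K' + 2 := ⟨K - 2, by omega⟩
  simp only [Nat.add_sub_cancel] at *
  have hK1 : K' + 2 - 1 = K' + 1 := by omega
  rw [hK1] at hηdec hdrawn hcount hne
  -- positivity part
  have hP : 0 < ∏ k ∈ Finset.Icc 1 K', (1 - η k) := by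
    apply Finset.prod_pos
    intro k hk
    rw [Finset.mem_Icc] at hk
    have := hηlt1 k hk.1 (by omega)
    linarith
  have hgap : 0 < η 1 - η (K' + 2) := by
    have := hstrict 1 (K' + 2) le_rfl (by omega) le_rfl
    linarith
  constructor
  · exact mul_pos (mul_pos hgap (by linarith)) hP
  -- main bound
  set e : ℕ → ℝ := fun t => if t = 0 then A else if t = K' + 1 then η (K' + 2) else η t with he
  set M : Multiset ℝ := Multiset.map β Finset.univ.val with hMdef
  have hMcard : Multiset.card M = K' + 2 := by simp [hMdef]
  have hmemM : ∀ x ∈ M, ∃ k, β k = x := by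
    intro x hx
    obtain ⟨k, _, hk⟩ := Multiset.mem_map.mp hx
    exact ⟨k, hk⟩
  have hηKlt : ∀ i, 1 ≤ i → i < K' + 2 → η (K' + 2) < η i := by
    intro i h1 h2; exact hstrict i (K' + 2) h1 h2 le_rfl
  -- count bounds
  have hcntM : ∀ t, 1 ≤ t → t < K' + 2 →
      Multiset.card (M.filter (fun x => e t < x)) ≤ t := by
    intro t ht htK
    by_cases hlast : t = K' + 1
    · -- e t = η (K'+2); need ≤ K'+1, uses hne
      subst hlast
      have het : e (K' + 1) = η (K' + 2) := by simp [he]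
      by_contra hgt
      push_neg at hgt
      have hsub : M.filter (fun x => e (K' + 1) < x) ≤ M := Multiset.filter_le _ _
      have hcards : Multiset.card (M.filter (fun x => e (K' + 1) < x)) ≤ K' + 2 := by
        calc Multiset.card (M.filter (fun x => e (K' + 1) < x)) ≤ Multiset.card M :=
              Multiset.card_le_card hsub
          _ = K' + 2 := hMcard
      have hfeq : M.filter (fun x => e (K' + 1) < x) = M := by
        apply Multiset.eq_of_le_of_card_le hsub
        omega
      have hall : ∀ x ∈ M, e (K' + 1) < x := by
        intro x hx
        rw [← hfeq] at hx
        exact (Multiset.mem_filter.mp hx).2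
      -- then M = the target multiset, contradiction
      apply hne
      have hMle : M ≤ (A ::ₘ (Finset.Icc 1 (K' + 1)).val.map η) := by
        rw [Multiset.le_iff_count]
        intro a
        by_cases haM : a ∈ M
        · obtain ⟨k, hk⟩ := hmemM a haM
          have haT : a ∈ (A ::ₘ (Finset.Icc 1 (K' + 1)).val.map η) := by
            rcases hdrawn k with h | ⟨i, hi, h⟩ | h
            · rw [hk] at h; rw [h]; exact Multiset.mem_cons_self _ _
            · rw [hk] at h
              rw [h]
              exact Multiset.mem_cons_of_mem (Multiset.mem_map.mpr ⟨i, hi, rfl⟩)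
            · exfalso
              have := hall a haM
              rw [het] at this
              rw [hk] at h
              linarith
          have h1 := hcount a haT
          have h2 : 1 ≤ Multiset.count a (A ::ₘ (Finset.Icc 1 (K' + 1)).val.map η) :=
            Multiset.one_le_count_iff_mem.mpr haT
          calc Multiset.count a M ≤ 1 := h1
            _ ≤ _ := h2
        · rw [Multiset.count_eq_zero_of_notMem haM]
          exact Nat.zero_le _
      apply Multiset.eq_of_le_of_card_le hMle
      simp [hMcard, Nat.card_Icc]
    · -- 1 ≤ t ≤ K', e t = η t
      have htK' : t ≤ K' := by omega
      have het : e t = η t := by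
        have ht0 : t ≠ 0 := by omega
        simp [he, ht0, hlast]
      have hTle : M.filter (fun x => e t < x) ≤ A ::ₘ (Finset.Icc 1 (t - 1)).val.map η := by
        rw [Multiset.le_iff_count]
        intro a
        by_cases haf : a ∈ M.filter (fun x => e t < x)
        · have ha := Multiset.mem_filter.mp haf
          obtain ⟨k, hk⟩ := hmemM a ha.1
          have hagt : η t < a := by rw [het] at ha; exact ha.2
          have haTt : a ∈ (A ::ₘ (Finset.Icc 1 (t - 1)).val.map η) ∧
              a ∈ (A ::ₘ (Finset.Icc 1 (K' + 1)).val.map η) := by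
            rcases hdrawn k with h | ⟨i, hi, h⟩ | h
            · rw [hk] at h; rw [h]
              exact ⟨Multiset.mem_cons_self _ _, Multiset.mem_cons_self _ _⟩
            · rw [hk] at h
              rw [Finset.mem_Icc] at hi
              have hit : i < t := by
                by_contra hit
                push_neg at hit
                have := hmono t i ht hit (by omega)
                rw [h] at hagt
                linarith
              constructor
              · rw [h]
                exact Multiset.mem_cons_of_mem (Multiset.mem_map.mpr
                  ⟨i, Finset.mem_Icc.mpr ⟨hi.1, by omega⟩, rfl⟩)
              · rw [h]
                exact Multiset.mem_cons_of_mem (Multiset.mem_map.mpr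
                  ⟨i, Finset.mem_Icc.mpr hi, rfl⟩)
            · exfalso
              rw [hk] at h
              have := hηKlt t ht (by omega)
              linarith
          have h1 := hcount a haTt.2
          have h2 : Multiset.count a (M.filter (fun x => e t < x)) ≤ Multiset.count a M :=
            Multiset.count_le_of_le a (Multiset.filter_le _ _)
          have h3 : 1 ≤ Multiset.count a (A ::ₘ (Finset.Icc 1 (t - 1)).val.map η) :=
            Multiset.one_le_count_iff_mem.mpr haTt.1
          omega
        · rw [Multiset.count_eq_zero_of_notMem haf]
          exact Nat.zero_le _
      calc Multiset.card (M.filter (fun x => e t < x))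
          ≤ Multiset.card (A ::ₘ (Finset.Icc 1 (t - 1)).val.map η) :=
            Multiset.card_le_card hTle
        _ = t := by simp [Nat.card_Icc]; omega
  -- apply the aux lemma
  have hmain := cascade_aux (K' + 2) M e hMcard
    (by
      intro x hx
      obtain ⟨k, hk⟩ := hmemM x hx
      rw [← hk]
      simpa [he] using hβleA k)
    (by
      intro t htK
      by_cases h0 : t = 0
      · simp [he, h0]; linarith
      by_cases h1 : t = K' + 1
      · simp [he, h0, h1]
        have := hηlt1 (K' + 2) (by omega) le_rfl
        linarith
      · have het : e t = η t := by simp [he, h0, h1]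
        rw [het]
        have := hηlt1 t (by omega) (by omega)
        linarith)
    hcntM
  -- compute the range product
  have hEprod : ∏ t ∈ Finset.range (K' + 2), (1 - e t)
      = (1 - A) * (1 - η (K' + 2)) * ∏ k ∈ Finset.Icc 1 K', (1 - η k) := by
    rw [Finset.prod_range_succ']
    rw [Finset.prod_range_succ]
    have h1 : e 0 = A := by simp [he]
    have h2 : e (K' + 1) = η (K' + 2) := by simp [he]
    have h3 : ∏ t ∈ Finset.range K', (1 - e (t + 1)) = ∏ k ∈ Finset.Icc 1 K', (1 - η k) := by
      rw [show Finset.Icc 1 K' = Finset.Ico 1 (K' + 1) from (Finset.Ico_add_one_right_eq_Icc 1 K').symm]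
      rw [Finset.prod_Ico_eq_prod_range]
      simp only [Nat.add_sub_cancel]
      apply Finset.prod_congr rfl
      intro t ht
      rw [Finset.mem_range] at ht
      have het : e (1 + t) = η (1 + t) := by
        have h1t : 1 + t ≠ 0 := by omega
        have h2t : 1 + t ≠ K' + 1 := by omega
        simp [he, h1t, h2t]
      rw [show t + 1 = 1 + t from by omega, het]
    rw [h1, h2, h3]
    ring
  have hprodeq : (M.map (fun x => 1 - x)).prod = ∏ k, (1 - β k) := by
    rw [hMdef, Multiset.map_map, Finset.prod_eq_multiset_prod]
    rfl
  rw [hEprod, hprodeq] at hmain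
  linarith
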